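/- Let β ∈ ℝ, D > 0, and let φ : ℝ³ → ℝ be continuous. Let P₁, P₂, P₃, P₄ ∈ ℝ³ be the vertices of a nondegenerate tetrahedron, i.e. P₂ − P₁, P₃ − P₁, P₄ − P₁ are linearly independent. For a constant vector field v ∈ ℝ³ and j = 1, 2, 3, define F_j(v) = (e^{−βφ(P_{j+1})}/D) ∫₀^{S_j} e^{βφ(P₁ + s·n_j)} (v · n_j) ds, where S_j = ‖P_{j+1} − P₁‖ and n_j = (P_{j+1} − P₁)/S_j. Then the 3×3 matrix with entries F_j(e_i), where e₁, e₂, e₃ is the standard basis of ℝ³, is nonsingular; equivalently F₁(v) = F₂(v) = F₃(v) = 0 implies v = 0. -/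
import Mathlib


open MeasureTheory intervalIntegral
open scoped RealInnerProductSpace

/-- The exponentially weighted line functional of a constant vector field `v ∈ ℝ³`
along the segment from `P` to `Q`:
`(e^{−βφ(Q)}/D) ∫₀^S e^{βφ(P + s·n)} (v · n) ds`,
where `S = ‖Q − P‖` and `n = (Q − P)/S`. -/
noncomputable def expFitFunctional3D (β D : ℝ) (φ : EuclideanSpace ℝ (Fin 3) → ℝ)
    (v P Q : EuclideanSpace ℝ (Fin 3)) : ℝ :=
  (Real.exp (-(β * φ Q)) / D) *
    ∫ s in (0:ℝ)..‖Q - P‖,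
      Real.exp (β * φ (P + s • (‖Q - P‖⁻¹ • (Q - P)))) * ⟪v, ‖Q - P‖⁻¹ • (Q - P)⟫

lemma expFit_factor_aux (β D : ℝ) (hD : 0 < D) (φ : EuclideanSpace ℝ (Fin 3) → ℝ)
    (hφ : Continuous φ) (P Q : EuclideanSpace ℝ (Fin 3)) (hPQ : Q - P ≠ 0) :
    ∃ c : ℝ, 0 < c ∧ ∀ v : EuclideanSpace ℝ (Fin 3),
      expFitFunctional3D β D φ v P Q = c * ⟪v, Q - P⟫ := by
  have hS : 0 < ‖Q - P‖ := norm_pos_iff.mpr hPQ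
  set n := ‖Q - P‖⁻¹ • (Q - P) with hn
  have hcont : Continuous fun s : ℝ => Real.exp (β * φ (P + s • n)) := by
    apply Real.continuous_exp.comp
    exact continuous_const.mul (hφ.comp (continuous_const.add (continuous_id.smul continuous_const)))
  refine ⟨(Real.exp (-(β * φ Q)) / D) *
      (∫ s in (0:ℝ)..‖Q - P‖, Real.exp (β * φ (P + s • n))) * ‖Q - P‖⁻¹, ?_, ?_⟩
  · have hint : 0 < ∫ s in (0:ℝ)..‖Q - P‖, Real.exp (β * φ (P + s • n)) :=
      intervalIntegral.intervalIntegral_pos_of_pos_on (hcont.intervalIntegrable _ _)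
        (fun x _ => Real.exp_pos _) hS
    positivity
  · intro v
    show (Real.exp (-(β * φ Q)) / D) *
      (∫ s in (0:ℝ)..‖Q - P‖, Real.exp (β * φ (P + s • n)) * ⟪v, n⟫) = _
    have h1 : ∀ s : ℝ, Real.exp (β * φ (P + s • n)) * ⟪v, n⟫
        = Real.exp (β * φ (P + s • n)) * (‖Q - P‖⁻¹ * ⟪v, Q - P⟫) := by
      intro s; rw [hn, real_inner_smul_right]
    simp only [h1]
    rw [intervalIntegral.integral_mul_const]
    ring

/-- For a nondegenerate tetrahedron with vertices `P₁, P₂, P₃, P₄` in `ℝ³`, the 3×3 matrix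
with entries `F_j(e_i)`, where `F_j(v)` is the exponentially weighted line functional of `v`
along the edge from `P₁` to `P_{j+1}` and `e₁, e₂, e₃` is the standard basis of `ℝ³`,
is nonsingular; equivalently `F₁(v) = F₂(v) = F₃(v) = 0` implies `v = 0`. -/
theorem expFit_interpolation_matrix_nonsingular_3D
    (β D : ℝ) (hD : 0 < D) (φ : EuclideanSpace ℝ (Fin 3) → ℝ) (hφ : Continuous φ)
    (P₁ P₂ P₃ P₄ : EuclideanSpace ℝ (Fin 3))
    (hind : LinearIndependent ℝ ![P₂ - P₁, P₃ - P₁, P₄ - P₁]) :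
    Matrix.det
      !![expFitFunctional3D β D φ (EuclideanSpace.single 0 1) P₁ P₂,
         expFitFunctional3D β D φ (EuclideanSpace.single 1 1) P₁ P₂,
         expFitFunctional3D β D φ (EuclideanSpace.single 2 1) P₁ P₂;
         expFitFunctional3D β D φ (EuclideanSpace.single 0 1) P₁ P₃,
         expFitFunctional3D β D φ (EuclideanSpace.single 1 1) P₁ P₃,
         expFitFunctional3D β D φ (EuclideanSpace.single 2 1) P₁ P₃;
         expFitFunctional3D β D φ (EuclideanSpace.single 0 1) P₁ P₄,
         expFitFunctional3D β D φ (EuclideanSpace.single 1 1) P₁ P₄,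
         expFitFunctional3D β D φ (EuclideanSpace.single 2 1) P₁ P₄] ≠ 0 ∧
    ∀ v : EuclideanSpace ℝ (Fin 3),
      expFitFunctional3D β D φ v P₁ P₂ = 0 → expFitFunctional3D β D φ v P₁ P₃ = 0 →
      expFitFunctional3D β D φ v P₁ P₄ = 0 → v = 0 := by
  have h2 : P₂ - P₁ ≠ 0 := by have := hind.ne_zero 0; simpa using this
  have h3 : P₃ - P₁ ≠ 0 := by have := hind.ne_zero 1; simpa using this
  have h4 : P₄ - P₁ ≠ 0 := by have := hind.ne_zero 2; simpa using this
  obtain ⟨c₂, hc₂, hf₂⟩ := expFit_factor_aux β D hD φ hφ P₁ P₂ h2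
  obtain ⟨c₃, hc₃, hf₃⟩ := expFit_factor_aux β D hD φ hφ P₁ P₃ h3
  obtain ⟨c₄, hc₄, hf₄⟩ := expFit_factor_aux β D hD φ hφ P₁ P₄ h4
  constructor
  · -- determinant part
    have hNdet : (Matrix.of fun j i => (![P₂ - P₁, P₃ - P₁, P₄ - P₁] j) i : Matrix (Fin 3) (Fin 3) ℝ).det ≠ 0 := by
      intro h
      obtain ⟨w, hw, hwe⟩ := Matrix.exists_vecMul_eq_zero_iff.mpr h
      apply hw
      have hz : ∑ j : Fin 3, w j • ![P₂ - P₁, P₃ - P₁, P₄ - P₁] j = 0 := by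
        ext i
        have := congrFun hwe i
        simpa [Matrix.vecMul, dotProduct, Fin.sum_univ_three] using this
      have := Fintype.linearIndependent_iff.mp hind w hz
      funext j; exact this j
    have key : Matrix.det
      !![expFitFunctional3D β D φ (EuclideanSpace.single 0 1) P₁ P₂,
         expFitFunctional3D β D φ (EuclideanSpace.single 1 1) P₁ P₂,
         expFitFunctional3D β D φ (EuclideanSpace.single 2 1) P₁ P₂;
         expFitFunctional3D β D φ (EuclideanSpace.single 0 1) P₁ P₃,
         expFitFunctional3D β D φ (EuclideanSpace.single 1 1) P₁ P₃,
         expFitFunctional3D β D φ (EuclideanSpace.single 2 1) P₁ P₃;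
         expFitFunctional3D β D φ (EuclideanSpace.single 0 1) P₁ P₄,
         expFitFunctional3D β D φ (EuclideanSpace.single 1 1) P₁ P₄,
         expFitFunctional3D β D φ (EuclideanSpace.single 2 1) P₁ P₄]
        = (c₂ * c₃ * c₄) *
          (Matrix.of fun j i => (![P₂ - P₁, P₃ - P₁, P₄ - P₁] j) i : Matrix (Fin 3) (Fin 3) ℝ).det := by
      simp only [Matrix.det_fin_three, hf₂, hf₃, hf₄, EuclideanSpace.inner_single_left,
        Matrix.of_apply, Matrix.cons_val', Matrix.cons_val_zero, Matrix.cons_val_one,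
        Matrix.head_cons, Matrix.head_fin_const, Matrix.empty_val', Matrix.cons_val_fin_one,
        Matrix.cons_val_two, Matrix.tail_cons, conj_trivial, one_mul]
      ring
    rw [key]
    exact mul_ne_zero (by positivity) hNdet
  · intro v hv2 hv3 hv4
    rw [hf₂ v] at hv2; rw [hf₃ v] at hv3; rw [hf₄ v] at hv4
    have i2 : ⟪v, P₂ - P₁⟫ = 0 := by
      rcases mul_eq_zero.mp hv2 with h | h; exact absurd h hc₂.ne'; exact h
    have i3 : ⟪v, P₃ - P₁⟫ = 0 := by
      rcases mul_eq_zero.mp hv3 with h | h; exact absurd h hc₃.ne'; exact h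
    have i4 : ⟪v, P₄ - P₁⟫ = 0 := by
      rcases mul_eq_zero.mp hv4 with h | h; exact absurd h hc₄.ne'; exact h
    have hcard : Fintype.card (Fin 3) = Module.finrank ℝ (EuclideanSpace ℝ (Fin 3)) := by
      simp [finrank_euclideanSpace]
    let b := basisOfLinearIndependentOfCardEqFinrank hind hcard
    have hb : ⇑b = ![P₂ - P₁, P₃ - P₁, P₄ - P₁] :=
      coe_basisOfLinearIndependentOfCardEqFinrank hind hcard
    have hvv : ⟪v, v⟫ = 0 := by
      have hrepr := b.sum_repr v
      have step : ⟪v, v⟫ = ⟪v, ∑ j, b.repr v j • b j⟫ := by rw [hrepr]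
      rw [step, inner_sum, Fin.sum_univ_three]
      simp only [real_inner_smul_right, hb, Matrix.cons_val_zero, Matrix.cons_val_one,
        Matrix.head_cons, Matrix.cons_val_two, Matrix.tail_cons]
      rw [i2, i3, i4]; ring
    exact inner_self_eq_zero.mp hvv
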